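/- Let J be an almost complex structure on a manifold, V a vector field of type (1,0) (i.e. JV = iV on the complexified tangent bundle), and f a smooth complex-valued function. Then the Lie derivative satisfies L_{fV} J = f · L_V J + 2i · V ⊗ ∂̄f, i.e. for every vector field W, (L_{fV}J)(W) = f (L_V J)(W) + 2i (∂̄f)(W) · V. -/
import Mathlib


/-- For an almost complex structure `J`, a type-(1,0) complex vector field `V` (`J V = i V`)
and a smooth complex function `f`, the Lie derivative satisfies
`L_{fV} J = f · L_V J + 2i · V ⊗ ∂̄f`, i.e. for every vector field `W`,
`(L_{fV}J)(W) = f (L_V J)(W) + 2i (∂̄f)(W) · V`, where `(L_Z J)(W) = [Z, JW] − J[Z, W]`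
and `(∂̄f)(W) = (1/2)(df(W) + i df(JW))`.

The setting is axiomatized: `A` is the (commutative ℂ-algebra) ring of smooth complex
functions, `VF` the `A`-module of complexified vector fields, `lie` the Lie bracket,
`d Z a` the derivative of the function `a` along the vector field `Z`, and `J` the
complex-linear extension of the almost complex structure. -/
theorem stmt1 {A : Type*} [CommRing A] [Algebra ℂ A]
    {VF : Type*} [AddCommGroup VF] [Module A VF]
    (lie : VF → VF → VF) (d : VF → A → A) (J : VF →+ VF)
    -- the bracket is antisymmetric and satisfies the Leibniz rule
    (hanti : ∀ Z W, lie Z W = - lie W Z)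
    (hleib : ∀ Z W (a : A), lie Z (a • W) = a • lie Z W + (d Z a) • W)
    -- J is linear over functions
    (hJlin : ∀ (a : A) (W : VF), J (a • W) = a • J W)
    (V : VF) (f : A)
    -- V is of type (1,0) : J V = i V
    (hV : J V = (algebraMap ℂ A Complex.I) • V) :
    ∀ W : VF,
      lie (f • V) (J W) - J (lie (f • V) W)
        = f • (lie V (J W) - J (lie V W))
          + (algebraMap ℂ A (2 * Complex.I)
              * (algebraMap ℂ A (1 / 2)
                  * (d W f + algebraMap ℂ A Complex.I * d (J W) f))) • V := by
  intro W
  set i : A := algebraMap ℂ A Complex.I with hi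
  have h1 : lie (f • V) (J W) = f • lie V (J W) - d (J W) f • V := by
    rw [hanti, hleib, hanti (J W) V]
    module
  have h2 : lie (f • V) W = f • lie V W - d W f • V := by
    rw [hanti, hleib, hanti W V]
    module
  have hii : i * i = -1 := by
    rw [hi, ← map_mul, Complex.I_mul_I, map_neg, map_one]
  have hs : algebraMap ℂ A (2 * Complex.I)
      * (algebraMap ℂ A (1 / 2) * (d W f + algebraMap ℂ A Complex.I * d (J W) f))
      = i * d W f - d (J W) f := by
    have h2i : algebraMap ℂ A (2 * Complex.I) * algebraMap ℂ A (1 / 2) = i := by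
      rw [← map_mul, hi]; congr 1; ring
    calc algebraMap ℂ A (2 * Complex.I)
        * (algebraMap ℂ A (1 / 2) * (d W f + algebraMap ℂ A Complex.I * d (J W) f))
        = (algebraMap ℂ A (2 * Complex.I) * algebraMap ℂ A (1 / 2))
            * (d W f + i * d (J W) f) := by rw [hi]; ring
      _ = i * d W f + (i * i) * d (J W) f := by rw [h2i]; ring
      _ = i * d W f - d (J W) f := by rw [hii]; ring
  rw [h1, h2, map_sub, hJlin, hJlin, hV, hs, smul_smul, smul_sub, sub_smul, mul_comm (d W f) i]
  abel
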